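/- arXiv:1907.12286 — 4 statements merged into one kernel-verified Lean document; each statement's English description precedes it below -/
import Mathlib

section
/- Let R_N and S_M be closed subspaces of a Hilbert space H with cos ω(R_N, S_M) := inf{‖P_{S_M} r‖ : r ∈ R_N, ‖r‖=1} > 0, and set μ = 1/cos ω. If G(f) ∈ R_N satisfies ⟨P_{S_M} G(f), r⟩ = ⟨P_{S_M} f, r⟩ for all r ∈ R_N, then ‖f − P_{R_N} f‖ ≤ ‖f − G(f)‖ ≤ μ ‖f − P_{R_N} f‖. -/
/-!
Put `d = f - P_R f ∈ Rᗮ` and `r = G - P_R f ∈ R`, so that `f - G = d - r` and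
`‖f - G‖² = ‖d‖² + ‖r‖²`. For the upper bound let `u = P_S r`: the consistency condition tested
against `r` gives `⟪u, d⟫ = ⟪u, r⟫ = ‖u‖²`, so Bessel's inequality for the orthogonal pair `d, r`
yields `‖u‖² (‖d‖² + ‖r‖²) ≤ ‖d‖² ‖r‖²`. Since `cos ω · ‖r‖ ≤ ‖u‖`, this is
`cos² ω · ‖f - G‖² ≤ ‖d‖²`.
-/

open scoped RealInnerProductSpace

lemma inner_sq_mul_add_inner_sq_mul_le {E : Type*} [SeminormedAddCommGroup E]
    [InnerProductSpace ℝ E] {d r : E} (hdr : ⟪d, r⟫ = 0) (u : E) :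
    ⟪u, d⟫ ^ 2 * ‖r‖ ^ 2 + ⟪u, r⟫ ^ 2 * ‖d‖ ^ 2 ≤ ‖u‖ ^ 2 * (‖d‖ ^ 2 * ‖r‖ ^ 2) := by
  set X := ⟪u, d⟫ ^ 2 * ‖r‖ ^ 2 + ⟪u, r⟫ ^ 2 * ‖d‖ ^ 2
  -- Cauchy–Schwarz against `v`, for which `⟪u, v⟫ = X` and `‖v‖² = ‖d‖² ‖r‖² X`
  set v := (⟪u, d⟫ * ‖r‖ ^ 2) • d + (⟪u, r⟫ * ‖d‖ ^ 2) • r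
  have huv : ⟪u, v⟫ = X := by
    simp only [v, X, inner_add_right, real_inner_smul_right]; ring
  have hvv : ⟪v, v⟫ = ‖d‖ ^ 2 * ‖r‖ ^ 2 * X := by
    simp only [v, X, inner_add_left, inner_add_right, real_inner_smul_left, real_inner_smul_right,
      hdr, real_inner_comm d r]
    rw [real_inner_self_eq_norm_sq, real_inner_self_eq_norm_sq]
    ring
  have hcs := real_inner_mul_inner_self_le u v
  rw [huv, hvv, real_inner_self_eq_norm_sq] at hcs
  rcases (show 0 ≤ X by positivity).eq_or_lt with hX | hX
  · rw [← hX]; positivity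
  · exact le_of_mul_le_mul_right (by linarith) hX

section LowerBoundOnUnitSphere

variable {E F 𝓕 : Type*} [NormedAddCommGroup E] [NormedSpace ℝ E] [SeminormedAddCommGroup F]
  [FunLike 𝓕 E F] (T : 𝓕) (R : Submodule ℝ E)

/-- For `T = P_S`, `sInf (normsOnUnitSphere T R)` is `cos ω(R, S)`. -/
def normsOnUnitSphere : Set ℝ := {y | ∃ r ∈ R, ‖r‖ = 1 ∧ y = ‖T r‖}

lemma bddBelow_normsOnUnitSphere : BddBelow (normsOnUnitSphere T R) :=
  ⟨0, by rintro _ ⟨r, -, -, rfl⟩; positivity⟩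

lemma sInf_normsOnUnitSphere_le_one (hT : ∀ x, ‖T x‖ ≤ ‖x‖)
    (hpos : 0 < sInf (normsOnUnitSphere T R)) : sInf (normsOnUnitSphere T R) ≤ 1 := by
  obtain ⟨_, r, hr, hr1, rfl⟩ : (normsOnUnitSphere T R).Nonempty :=
    Set.nonempty_iff_ne_empty.2 fun h => by simp [h] at hpos
  exact (csInf_le (bddBelow_normsOnUnitSphere T R) ⟨r, hr, hr1, rfl⟩).trans (hr1 ▸ hT r)

variable [NormedSpace ℝ F] [LinearMapClass 𝓕 ℝ E F]

lemma sInf_normsOnUnitSphere_mul_norm_le {x : E} (hx : x ∈ R) :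
    sInf (normsOnUnitSphere T R) * ‖x‖ ≤ ‖T x‖ := by
  rcases eq_or_ne x 0 with rfl | hx0
  · simp
  have hxn : 0 < ‖x‖ := norm_pos_iff.2 hx0
  have hmem : ‖x‖⁻¹ * ‖T x‖ ∈ normsOnUnitSphere T R :=
    ⟨‖x‖⁻¹ • x, R.smul_mem _ hx, by rw [norm_smul, norm_inv, norm_norm, inv_mul_cancel₀ hxn.ne'],
      by rw [map_smul, norm_smul, norm_inv, norm_norm]⟩
  have hle := csInf_le (bddBelow_normsOnUnitSphere T R) hmem
  rwa [← div_eq_inv_mul, le_div_iff₀ hxn] at hle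

end LowerBoundOnUnitSphere

lemma mul_norm_sub_le_of_inner_starProjection_sub_eq_zero {H : Type*} [NormedAddCommGroup H]
    [InnerProductSpace ℝ H] {R S : Submodule ℝ H} [S.HasOrthogonalProjection] {c : ℝ}
    (hc0 : 0 ≤ c) (hc1 : c ≤ 1) (hangle : ∀ x ∈ R, c * ‖x‖ ≤ ‖S.starProjection x‖)
    {d r : H} (hd : d ∈ Rᗮ) (hr : r ∈ R) (hcons : ⟪S.starProjection (d - r), r⟫ = 0) :
    c * ‖d - r‖ ≤ ‖d‖ := by
  rcases eq_or_ne r 0 with rfl | hr0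
  · simpa using mul_le_of_le_one_left (norm_nonneg d) hc1
  rcases hc0.eq_or_lt with rfl | hc
  · simp
  set u := S.starProjection r
  have hur : ⟪u, r⟫ = ‖u‖ ^ 2 := by
    simpa using S.re_inner_starProjection_eq_normSq r
  have hud : ⟪u, d⟫ = ‖u‖ ^ 2 := by
    rw [S.inner_starProjection_left_eq_right, real_inner_comm, ← hur]
    rwa [map_sub, inner_sub_left, sub_eq_zero] at hcons
  have hdr : ⟪d, r⟫ = 0 := Submodule.inner_left_of_mem_orthogonal hr hd
  have hs : 0 < ‖r‖ := norm_pos_iff.2 hr0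
  have hcu : c * ‖r‖ ≤ ‖u‖ := hangle r hr
  have hu : 0 < ‖u‖ := (mul_pos hc hs).trans_le hcu
  have hbessel : ‖u‖ ^ 2 * (‖d‖ ^ 2 + ‖r‖ ^ 2) ≤ ‖d‖ ^ 2 * ‖r‖ ^ 2 := by
    have h := inner_sq_mul_add_inner_sq_mul_le hdr u
    rw [hud, hur] at h
    exact le_of_mul_le_mul_left (by linarith) (pow_pos hu 2)
  have hpyth : ‖d - r‖ ^ 2 = ‖d‖ ^ 2 + ‖r‖ ^ 2 := by
    simpa only [sq] using norm_sub_sq_eq_norm_sq_add_norm_sq_real hdr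
  rw [← sq_le_sq₀ (by positivity) (norm_nonneg d), mul_pow, hpyth]
  refine le_of_mul_le_mul_left ?_ (pow_pos hs 2)
  calc ‖r‖ ^ 2 * (c ^ 2 * (‖d‖ ^ 2 + ‖r‖ ^ 2)) = (c * ‖r‖) ^ 2 * (‖d‖ ^ 2 + ‖r‖ ^ 2) := by ring
    _ ≤ ‖u‖ ^ 2 * (‖d‖ ^ 2 + ‖r‖ ^ 2) := by gcongr
    _ ≤ ‖d‖ ^ 2 * ‖r‖ ^ 2 := hbessel
    _ = ‖r‖ ^ 2 * ‖d‖ ^ 2 := mul_comm _ _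

theorem generalized_sampling_error_bounds_general (H : Type*) [NormedAddCommGroup H]
    [InnerProductSpace ℝ H]
    (RN SM : Submodule ℝ H) [Submodule.HasOrthogonalProjection RN] [Submodule.HasOrthogonalProjection SM]
    (c : ℝ)
    (hc : c = sInf {y : ℝ | ∃ r ∈ RN, ‖r‖ = 1 ∧ y = ‖(Submodule.orthogonalProjectionOnto SM r : H)‖})
    (hcpos : 0 < c) (f G : H) (hG : G ∈ RN)
    (hcons : ∀ r ∈ RN, ⟪(Submodule.orthogonalProjectionOnto SM G : H), r⟫ = ⟪(Submodule.orthogonalProjectionOnto SM f : H), r⟫) :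
    ‖f - (Submodule.orthogonalProjectionOnto RN f : H)‖ ≤ ‖f - G‖ ∧
      ‖f - G‖ ≤ (1 / c) * ‖f - (Submodule.orthogonalProjectionOnto RN f : H)‖ := by
  simp only [Submodule.coe_orthogonalProjectionOnto_apply] at hc hcons ⊢
  have hangle : ∀ x ∈ RN, c * ‖x‖ ≤ ‖SM.starProjection x‖ := fun x hx =>
    hc ▸ sInf_normsOnUnitSphere_mul_norm_le _ RN hx
  have hc1 : c ≤ 1 :=
    hc ▸ sInf_normsOnUnitSphere_le_one _ RN SM.norm_starProjection_apply_le (hc ▸ hcpos)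
  set P := RN.starProjection f
  have hr : G - P ∈ RN := RN.sub_mem hG (RN.starProjection_apply_mem f)
  have hcons' : ⟪SM.starProjection ((f - P) - (G - P)), G - P⟫ = 0 := by
    rw [sub_sub_sub_cancel_right, map_sub, inner_sub_left, hcons _ hr, sub_self]
  have hbound := mul_norm_sub_le_of_inner_starProjection_sub_eq_zero hcpos.le hc1 hangle
    (RN.sub_starProjection_mem_orthogonal f) hr hcons'
  rw [sub_sub_sub_cancel_right] at hbound
  refine ⟨?_, ?_⟩
  · rw [Submodule.starProjection_minimal]
    exact ciInf_le (by exact ⟨0, by rintro _ ⟨x, rfl⟩; positivity⟩) (⟨G, hG⟩ : RN)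
  · rw [one_div_mul_eq_div, le_div_iff₀ hcpos, mul_comm]
    exact hbound

theorem generalized_sampling_error_bounds (H : Type*) [NormedAddCommGroup H]
    [InnerProductSpace ℝ H] [CompleteSpace H]
    (RN SM : Submodule ℝ H) [Submodule.HasOrthogonalProjection RN] [Submodule.HasOrthogonalProjection SM]
    (c : ℝ)
    (hc : c = sInf {y : ℝ | ∃ r ∈ RN, ‖r‖ = 1 ∧ y = ‖(Submodule.orthogonalProjectionOnto SM r : H)‖})
    (hcpos : 0 < c) (f G : H) (hG : G ∈ RN)
    (hcons : ∀ r ∈ RN, ⟪(Submodule.orthogonalProjectionOnto SM G : H), r⟫ = ⟪(Submodule.orthogonalProjectionOnto SM f : H), r⟫) :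
    ‖f - (Submodule.orthogonalProjectionOnto RN f : H)‖ ≤ ‖f - G‖ ∧
      ‖f - G‖ ≤ (1 / c) * ‖f - (Submodule.orthogonalProjectionOnto RN f : H)‖ :=
  generalized_sampling_error_bounds_general H RN SM c hc hcpos f G hG hcons
end

section
/- Let R_N and S_M be closed subspaces of a Hilbert space H with μ(R_N, S_M) := 1/inf{‖P_{S_M} r‖ : r ∈ R_N, ‖r‖=1} < ∞, and let G(f) be the generalized sampling reconstruction of f (the unique g ∈ R_N with ⟨P_{S_M} g, r⟩ = ⟨P_{S_M} f, r⟩ for all r ∈ R_N). Then ‖G(f)‖ ≤ μ(R_N, S_M) ‖f‖ for all f ∈ H. -/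
/-!
Testing the consistency equation against `G` itself gives
`‖P G‖² = ⟪P f, G⟫ = ⟪f, P G⟫ ≤ ‖f‖ ‖P G‖`, so `‖P G‖ ≤ ‖f‖`; and since `c` is a lower bound for
`‖P r‖` on unit vectors of `R_N`, homogeneity gives `c ‖G‖ ≤ ‖P G‖`.
-/

open scoped RealInnerProductSpace

theorem mul_norm_le_norm_apply_of_forall_norm_eq_one {E F : Type*}
    [NormedAddCommGroup E] [NormedSpace ℝ E] [NormedAddCommGroup F] [NormedSpace ℝ F]
    (T : E →L[ℝ] F) (R : Submodule ℝ E) {c : ℝ} (hc : ∀ r ∈ R, ‖r‖ = 1 → c ≤ ‖T r‖)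
    {g : E} (hg : g ∈ R) : c * ‖g‖ ≤ ‖T g‖ := by
  rcases eq_or_ne g 0 with rfl | hg0
  · simp
  have hpos : 0 < ‖g‖ := norm_pos_iff.mpr hg0
  have hunit := hc (‖g‖⁻¹ • g) (R.smul_mem _ hg) (norm_smul_inv_norm hg0)
  rw [map_smul, norm_smul, norm_inv, norm_norm, inv_mul_eq_div, le_div_iff₀ hpos] at hunit
  exact hunit

theorem norm_starProjection_le_of_inner_eq {H : Type*} [NormedAddCommGroup H]
    [InnerProductSpace ℝ H] (K : Submodule ℝ H) [K.HasOrthogonalProjection] {f g : H}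
    (h : ⟪K.starProjection g, g⟫ = ⟪K.starProjection f, g⟫) :
    ‖K.starProjection g‖ ≤ ‖f‖ := by
  have hsq : ‖K.starProjection g‖ ^ 2 ≤ ‖f‖ * ‖K.starProjection g‖ :=
    calc ‖K.starProjection g‖ ^ 2 = ⟪K.starProjection g, g⟫ := by
          rw [← real_inner_self_eq_norm_sq, K.inner_starProjection_left_eq_right,
            Submodule.starProjection_eq_self_iff.mpr (K.starProjection_apply_mem g), real_inner_comm]
      _ = ⟪f, K.starProjection g⟫ := by rw [h, K.inner_starProjection_left_eq_right]
      _ ≤ ‖f‖ * ‖K.starProjection g‖ := real_inner_le_norm _ _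
  nlinarith [norm_nonneg (K.starProjection g), norm_nonneg f]

theorem generalized_sampling_norm_bound_general (H : Type*) [NormedAddCommGroup H]
    [InnerProductSpace ℝ H]
    (RN SM : Submodule ℝ H) [Submodule.HasOrthogonalProjection SM]
    (c : ℝ)
    (hc : c = sInf {y : ℝ | ∃ r ∈ RN, ‖r‖ = 1 ∧ y = ‖(Submodule.orthogonalProjectionOnto SM r : H)‖})
    (hcpos : 0 < c) (f G : H) (hG : G ∈ RN)
    (hcons : ∀ r ∈ RN, ⟪(Submodule.orthogonalProjectionOnto SM G : H), r⟫ = ⟪(Submodule.orthogonalProjectionOnto SM f : H), r⟫) :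
    ‖G‖ ≤ (1 / c) * ‖f‖ := by
  have hlower : ∀ r ∈ RN, ‖r‖ = 1 → c ≤ ‖SM.starProjection r‖ := fun r hr hr1 =>
    hc ▸ csInf_le ⟨0, by rintro y ⟨r, -, -, rfl⟩; positivity⟩ ⟨r, hr, hr1, rfl⟩
  have hG_le : c * ‖G‖ ≤ ‖SM.starProjection G‖ :=
    mul_norm_le_norm_apply_of_forall_norm_eq_one _ RN hlower hG
  have hPG_le : ‖SM.starProjection G‖ ≤ ‖f‖ :=
    norm_starProjection_le_of_inner_eq SM (hcons G hG)
  rw [one_div, inv_mul_eq_div, le_div_iff₀ hcpos]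
  linarith

theorem generalized_sampling_norm_bound (H : Type*) [NormedAddCommGroup H]
    [InnerProductSpace ℝ H] [CompleteSpace H]
    (RN SM : Submodule ℝ H) [Submodule.HasOrthogonalProjection RN] [Submodule.HasOrthogonalProjection SM]
    (c : ℝ)
    (hc : c = sInf {y : ℝ | ∃ r ∈ RN, ‖r‖ = 1 ∧ y = ‖(Submodule.orthogonalProjectionOnto SM r : H)‖})
    (hcpos : 0 < c) (f G : H) (hG : G ∈ RN)
    (hcons : ∀ r ∈ RN, ⟪(Submodule.orthogonalProjectionOnto SM G : H), r⟫ = ⟪(Submodule.orthogonalProjectionOnto SM f : H), r⟫) :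
    ‖G‖ ≤ (1 / c) * ‖f‖ :=
  generalized_sampling_norm_bound_general H RN SM c hc hcpos f G hG hcons
end

section
/- Let H be a Hilbert space, R_N a finite-dimensional subspace, S_M a closed subspace with cos ω(R_N, S_M) > 0. For f ∈ H with measurement s = P_{S_M} f, let g* = argmin_{g ∈ R_N} ‖s − P_{S_M} g‖ and f* = s + P_{S_M}^⊥ g* (the PBDW reconstruction). Then ‖f − f*‖ ≤ μ(R_N, S_M) · dist(f, R_N), where μ = 1/cos ω and dist(f, R_N) = ‖f − P_{R_N} f‖. -/
/-!
The error `f - f*` equals `P_Sᗮ (f - g*)`, a vector of `Sᗮ`, and minimality of `g*` makes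
`P_S (f - g*)` orthogonal to `P_S R`. Hence for every `r ∈ R` the vector `f - r` splits
orthogonally as `(f - f* - (r - g*)) + P_S (f - g*)`, so `‖f - f* - (r - g*)‖ ≤ ‖f - r‖`.
Finally a vector `v ∈ Sᗮ` is at distance at least `cos ω · ‖v‖` from `R`: writing
`s = ‖P_Sᗮ r‖` and `p = ‖P_S r‖`, one has `‖v - r‖² ≥ (‖v‖ - s)² + p²` and
`cos² ω · (s² + p²) ≤ p²`, and a discriminant computation finishes.
-/

open scoped RealInnerProductSpace

noncomputable def cosAngle {H : Type*} [NormedAddCommGroup H] [InnerProductSpace ℝ H]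
    (R S : Submodule ℝ H) [S.HasOrthogonalProjection] : ℝ :=
  sInf {y : ℝ | ∃ r ∈ R, ‖r‖ = 1 ∧ y = ‖(S.orthogonalProjectionOnto r : H)‖}

lemma sq_mul_sq_le_sub_sq_add_sq {c t s p : ℝ} (hc : c ^ 2 ≤ 1)
    (h : c ^ 2 * (s ^ 2 + p ^ 2) ≤ p ^ 2) : c ^ 2 * t ^ 2 ≤ (t - s) ^ 2 + p ^ 2 := by
  rcases hc.lt_or_eq with hc | hc
  · -- `(1 - c²) · (rhs - lhs) = ((1 - c²) t - s)² + ((1 - c²) p² - c² s²)`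
    have hmul : 0 ≤ (1 - c ^ 2) * ((t - s) ^ 2 + p ^ 2 - c ^ 2 * t ^ 2) := by
      nlinarith [sq_nonneg ((1 - c ^ 2) * t - s)]
    nlinarith [nonneg_of_mul_nonneg_right hmul (by linarith)]
  · have hs : s = 0 := by nlinarith [pow_eq_zero_iff (n := 2) (a := s) two_ne_zero]
    subst hs
    nlinarith

section

variable {H : Type*} [NormedAddCommGroup H] [InnerProductSpace ℝ H]

lemma inner_sub_eq_zero_of_forall_norm_sub_le {F : Type*} [NormedAddCommGroup F]
    [InnerProductSpace ℝ F] (A : H →ₗ[ℝ] F) {R : Submodule ℝ H} {y : F} {g : H} (hg : g ∈ R)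
    (hmin : ∀ g' ∈ R, ‖y - A g‖ ≤ ‖y - A g'‖) {r : H} (hr : r ∈ R) :
    ⟪y - A g, A r⟫ = 0 := by
  have hAg : A g ∈ R.map A := Submodule.mem_map_of_mem hg
  have hinf : ‖y - A g‖ = ⨅ w : (R.map A : Set F), ‖y - w‖ := by
    have hbdd : BddBelow (Set.range fun w : (R.map A : Set F) => ‖y - w‖) :=
      ⟨0, by rintro _ ⟨w, rfl⟩; exact norm_nonneg _⟩
    refine le_antisymm (le_ciInf ?_) (ciInf_le hbdd ⟨A g, hAg⟩)
    rintro ⟨_, g', hg', rfl⟩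
    exact hmin g' hg'
  exact (Submodule.norm_eq_iInf_iff_real_inner_eq_zero _ hAg).1 hinf _
    (Submodule.mem_map_of_mem hr)

variable (R S : Submodule ℝ H) [S.HasOrthogonalProjection]

lemma cosAngle_nonneg : 0 ≤ cosAngle R S :=
  Real.sInf_nonneg fun _ ⟨_, _, _, hy⟩ => hy ▸ norm_nonneg _

lemma bddBelow_cosAngle_set :
    BddBelow {y : ℝ | ∃ r ∈ R, ‖r‖ = 1 ∧ y = ‖(S.orthogonalProjectionOnto r : H)‖} :=
  ⟨0, fun _ ⟨_, _, _, hy⟩ => hy ▸ norm_nonneg _⟩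

lemma cosAngle_le_one : cosAngle R S ≤ 1 := by
  by_cases hne : {y : ℝ | ∃ r ∈ R, ‖r‖ = 1 ∧ y = ‖(S.orthogonalProjectionOnto r : H)‖}.Nonempty
  · obtain ⟨_, r, hr, hr1, rfl⟩ := hne
    calc cosAngle R S ≤ ‖(S.orthogonalProjectionOnto r : H)‖ :=
          csInf_le (bddBelow_cosAngle_set R S) ⟨r, hr, hr1, rfl⟩
      _ ≤ ‖r‖ := S.norm_starProjection_apply_le r
      _ = 1 := hr1
  · rw [cosAngle, Set.not_nonempty_iff_eq_empty.1 hne, Real.sInf_empty]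
    exact zero_le_one

variable {R S}

lemma cosAngle_mul_norm_le_norm_starProjection {r : H} (hr : r ∈ R) :
    cosAngle R S * ‖r‖ ≤ ‖S.starProjection r‖ := by
  rcases eq_or_ne r 0 with rfl | hr0
  · simp
  have hnorm : 0 < ‖r‖ := norm_pos_iff.2 hr0
  have hunit : ‖‖r‖⁻¹ • r‖ = 1 := by
    rw [norm_smul, norm_inv, norm_norm, inv_mul_cancel₀ hnorm.ne']
  have hle : cosAngle R S ≤ ‖S.starProjection (‖r‖⁻¹ • r)‖ :=
    csInf_le (bddBelow_cosAngle_set R S) ⟨_, R.smul_mem _ hr, hunit, rfl⟩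
  rw [map_smul, norm_smul, norm_inv, norm_norm] at hle
  rwa [le_inv_mul_iff₀ hnorm, mul_comm] at hle

lemma cosAngle_mul_norm_le_norm_sub {v r : H} (hv : v ∈ Sᗮ) (hr : r ∈ R) :
    cosAngle R S * ‖v‖ ≤ ‖v - r‖ := by
  set c := cosAngle R S
  have hpyth : ‖r‖ ^ 2 = ‖S.starProjection r‖ ^ 2 + ‖Sᗮ.starProjection r‖ ^ 2 :=
    Submodule.norm_sq_eq_add_norm_sq_starProjection r S
  have hinner : ⟪v, r⟫ ≤ ‖v‖ * ‖Sᗮ.starProjection r‖ := by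
    calc ⟪v, r⟫ = ⟪Sᗮ.starProjection v, r⟫ := by rw [Submodule.starProjection_eq_self_iff.2 hv]
      _ = ⟪v, Sᗮ.starProjection r⟫ := Submodule.inner_starProjection_left_eq_right _ _ _
      _ ≤ _ := real_inner_le_norm _ _
  have hangle : c ^ 2 * ‖r‖ ^ 2 ≤ ‖S.starProjection r‖ ^ 2 := by
    rw [← mul_pow]
    exact pow_le_pow_left₀ (mul_nonneg (cosAngle_nonneg R S) (norm_nonneg r))
      (cosAngle_mul_norm_le_norm_starProjection hr) 2
  have hc : c ^ 2 ≤ 1 := pow_le_one₀ (cosAngle_nonneg R S) (cosAngle_le_one R S)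
  have key := sq_mul_sq_le_sub_sq_add_sq (t := ‖v‖) hc (by rwa [add_comm, ← hpyth])
  rw [← pow_le_pow_iff_left₀ (mul_nonneg (cosAngle_nonneg R S) (norm_nonneg v)) (norm_nonneg _)
    two_ne_zero, mul_pow, norm_sub_sq_real, hpyth]
  nlinarith

lemma cosAngle_mul_norm_starProjection_orthogonal_sub_le {f g r : H} (hg : g ∈ R)
    (horth : ∀ r ∈ R, ⟪S.starProjection f - S.starProjection g, S.starProjection r⟫ = 0)
    (hr : r ∈ R) : cosAngle R S * ‖Sᗮ.starProjection (f - g)‖ ≤ ‖f - r‖ := by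
  set w := f - g
  set η := Sᗮ.starProjection w
  have hrg : r - g ∈ R := R.sub_mem hr hg
  have hdecomp : f - r = (η - (r - g)) + S.starProjection w := by
    simp only [η, w, Submodule.starProjection_orthogonal_val]
    abel
  have hperp : ⟪η - (r - g), S.starProjection w⟫ = 0 := by
    have hη : ⟪η, S.starProjection w⟫ = 0 :=
      Submodule.inner_left_of_mem_orthogonal (S.starProjection_apply_mem w)
        (Sᗮ.starProjection_apply_mem w)
    have hPrg : ⟪r - g, S.starProjection w⟫ = 0 := by
      rw [← Submodule.starProjection_eq_self_iff.2 (S.starProjection_apply_mem w),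
        ← Submodule.inner_starProjection_left_eq_right, real_inner_comm]
      simpa only [← map_sub] using horth _ hrg
    rw [inner_sub_left, hη, hPrg, sub_zero]
  calc cosAngle R S * ‖η‖ ≤ ‖η - (r - g)‖ :=
        cosAngle_mul_norm_le_norm_sub (Sᗮ.starProjection_apply_mem w) hrg
    _ ≤ ‖f - r‖ := by
      rw [hdecomp, mul_self_le_mul_self_iff (norm_nonneg _) (norm_nonneg _),
        norm_add_sq_eq_norm_sq_add_norm_sq_real hperp]
      exact le_add_of_nonneg_right (mul_self_nonneg _)

end

theorem pbdw_error_bound_general (H : Type*) [NormedAddCommGroup H]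
    [InnerProductSpace ℝ H]
    (RN SM : Submodule ℝ H) [Submodule.HasOrthogonalProjection RN]
    [Submodule.HasOrthogonalProjection SM]
    (c : ℝ)
    (hc : c = sInf {y : ℝ | ∃ r ∈ RN, ‖r‖ = 1 ∧ y = ‖(Submodule.orthogonalProjectionOnto SM r : H)‖})
    (hcpos : 0 < c) (f g : H) (hg : g ∈ RN)
    (hmin : ∀ g' ∈ RN,
      ‖(Submodule.orthogonalProjectionOnto SM f : H) - (Submodule.orthogonalProjectionOnto SM g : H)‖ ≤
        ‖(Submodule.orthogonalProjectionOnto SM f : H) - (Submodule.orthogonalProjectionOnto SM g' : H)‖) :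
    ‖f - ((Submodule.orthogonalProjectionOnto SM f : H) + (g - (Submodule.orthogonalProjectionOnto SM g : H)))‖ ≤
      (1 / c) * ‖f - (Submodule.orthogonalProjectionOnto RN f : H)‖ := by
  simp only [Submodule.coe_orthogonalProjectionOnto_apply] at hmin ⊢
  have hc : c = cosAngle RN SM := hc
  have horth : ∀ r ∈ RN, ⟪SM.starProjection f - SM.starProjection g, SM.starProjection r⟫ = 0 :=
    fun r hr => inner_sub_eq_zero_of_forall_norm_sub_le (SM.starProjection : H →ₗ[ℝ] H) hg hmin hr
  have herr : f - (SM.starProjection f + (g - SM.starProjection g)) =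
      SMᗮ.starProjection (f - g) := by
    rw [Submodule.starProjection_orthogonal_val, map_sub]
    abel
  rw [herr, one_div_mul_eq_div, le_div_iff₀ hcpos, mul_comm, hc]
  exact cosAngle_mul_norm_starProjection_orthogonal_sub_le hg horth (RN.starProjection_apply_mem f)

theorem pbdw_error_bound (H : Type*) [NormedAddCommGroup H]
    [InnerProductSpace ℝ H] [CompleteSpace H]
    (RN SM : Submodule ℝ H) [FiniteDimensional ℝ RN] [Submodule.HasOrthogonalProjection RN]
    [Submodule.HasOrthogonalProjection SM]
    (c : ℝ)
    (hc : c = sInf {y : ℝ | ∃ r ∈ RN, ‖r‖ = 1 ∧ y = ‖(Submodule.orthogonalProjectionOnto SM r : H)‖})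
    (hcpos : 0 < c) (f g : H) (hg : g ∈ RN)
    (hmin : ∀ g' ∈ RN,
      ‖(Submodule.orthogonalProjectionOnto SM f : H) - (Submodule.orthogonalProjectionOnto SM g : H)‖ ≤
        ‖(Submodule.orthogonalProjectionOnto SM f : H) - (Submodule.orthogonalProjectionOnto SM g' : H)‖) :
    ‖f - ((Submodule.orthogonalProjectionOnto SM f : H) + (g - (Submodule.orthogonalProjectionOnto SM g : H)))‖ ≤
      (1 / c) * ‖f - (Submodule.orthogonalProjectionOnto RN f : H)‖ :=
  pbdw_error_bound_general H RN SM c hc hcpos f g hg hmin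
end

section
/- Let H be a Hilbert space, S_M a closed subspace, and K_s = {f ∈ H : dist(f, R_N) ≤ ε_N and P_{S_M} f = s}. For the PBDW map A*(s) = s + P_{S_M}^⊥ g* with g* = argmin_{g∈R_N} ‖s − P_{S_M} g‖, and for any f ∈ H with P_{S_M} f = s: ‖f − A*(s)‖ ≤ μ(R_N, S_M) · dist(f, R_N ⊕ (S_M ∩ R_N^⊥)), where μ(R_N,S_M) = 1/inf_{r∈R_N,‖r‖=1}‖P_{S_M}r‖ is assumed finite. -/
/-!
Write `P` for the projection onto `S_M`, `V = R_N ⊕ (S_M ∩ R_N^⊥)` and `A = s + g - P g`.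
Minimality of `g` makes `s - P g` orthogonal to `P R_N`, hence, lying in `S_M`, to `R_N`; so `A ∈ V`,
while `η = f - A = (f - g) - P (f - g)` lies in `S_M^⊥`. For `v ∈ V` write `v - A = r + w` with
`r ∈ R_N`, `w ∈ S_M ∩ R_N^⊥`; then `w ⊥ η - r`, so `‖f - v‖ ≥ ‖η - r‖`. Since `η ⊥ S_M`,
`|⟪η, r⟫| ≤ ‖η‖ ‖(1 - P) r‖ ≤ √(1 - c²) ‖η‖ ‖r‖`, and AM-GM gives `‖η - r‖ ≥ c ‖η‖`.
-/

open scoped RealInnerProductSpace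

open Submodule

section LowerBound

variable {E F 𝓕 : Type*} [SeminormedAddCommGroup E] [NormedSpace ℝ E] [SeminormedAddCommGroup F]
  [FunLike 𝓕 E F]

/-- For `T = P_{S_M}` and `L = R_N` this is `cos ω(R_N, S_M) = 1 / μ(R_N, S_M)`. -/
noncomputable def infNormOnUnitSphere (T : 𝓕) (L : Submodule ℝ E) : ℝ :=
  sInf {y : ℝ | ∃ u ∈ L, ‖u‖ = 1 ∧ y = ‖T u‖}

theorem infNormOnUnitSphere_le (T : 𝓕) {L : Submodule ℝ E} {u : E} (hu : u ∈ L)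
    (hu1 : ‖u‖ = 1) : infNormOnUnitSphere T L ≤ ‖T u‖ :=
  csInf_le ⟨0, by rintro y ⟨v, -, -, rfl⟩; exact norm_nonneg _⟩ ⟨u, hu, hu1, rfl⟩

theorem infNormOnUnitSphere_le_one (T : 𝓕) (L : Submodule ℝ E) (hT : ∀ u, ‖T u‖ ≤ ‖u‖)
    (hpos : 0 < infNormOnUnitSphere T L) : infNormOnUnitSphere T L ≤ 1 := by
  rcases Set.eq_empty_or_nonempty {y : ℝ | ∃ u ∈ L, ‖u‖ = 1 ∧ y = ‖T u‖} with
    h | ⟨_, u, hu, hu1, rfl⟩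
  · rw [infNormOnUnitSphere, h, Real.sInf_empty] at hpos
    exact absurd hpos (lt_irrefl 0)
  exact (infNormOnUnitSphere_le T hu hu1).trans (hu1 ▸ hT u)

variable [NormedSpace ℝ F] [LinearMapClass 𝓕 ℝ E F]

theorem infNormOnUnitSphere_mul_norm_le (T : 𝓕) {L : Submodule ℝ E} {r : E} (hr : r ∈ L) :
    infNormOnUnitSphere T L * ‖r‖ ≤ ‖T r‖ := by
  rcases eq_or_ne ‖r‖ 0 with hr0 | hr0
  · simp [hr0]
  have hle := infNormOnUnitSphere_le T (L.smul_mem ‖r‖⁻¹ hr)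
    (by rw [norm_smul, norm_inv, norm_norm, inv_mul_cancel₀ hr0])
  rw [map_smul, norm_smul, norm_inv, norm_norm] at hle
  calc _ ≤ ‖r‖⁻¹ * ‖T r‖ * ‖r‖ := by gcongr
    _ = ‖T r‖ := by field_simp

end LowerBound

section Projection

variable {E : Type*} [NormedAddCommGroup E] [InnerProductSpace ℝ E]

theorem inner_sub_eq_zero_of_forall_norm_sub_le_s19 (W : Submodule ℝ E) {u v : E} (hv : v ∈ W)
    (hmin : ∀ w ∈ W, ‖u - v‖ ≤ ‖u - w‖) : ∀ w ∈ W, ⟪u - v, w⟫ = 0 := by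
  refine (norm_eq_iInf_iff_real_inner_eq_zero W hv).mp (le_antisymm ?_ ?_)
  · exact le_ciInf fun w ↦ hmin w w.2
  · exact ciInf_le ⟨0, by rintro _ ⟨w, rfl⟩; exact norm_nonneg _⟩ (⟨v, hv⟩ : (W : Set E))

variable (K L : Submodule ℝ E) [K.HasOrthogonalProjection]

theorem sub_starProjection_mem_inf_orthogonal {s g : E} (hs : s ∈ K) (hg : g ∈ L)
    (hmin : ∀ g' ∈ L, ‖s - K.starProjection g‖ ≤ ‖s - K.starProjection g'‖) :
    s - K.starProjection g ∈ K ⊓ Lᗮ := by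
  have hmem : s - K.starProjection g ∈ K := K.sub_mem hs (K.starProjection_apply_mem g)
  refine ⟨hmem, fun r hr ↦ ?_⟩
  have horth := inner_sub_eq_zero_of_forall_norm_sub_le_s19 (L.map K.starProjection)
    (mem_map_of_mem hg) (by rintro _ ⟨g', hg', rfl⟩; exact hmin g' hg') _ (mem_map_of_mem hr)
  rw [ContinuousLinearMap.coe_coe, ← inner_starProjection_left_eq_right,
    starProjection_eq_self_iff.mpr hmem] at horth
  rwa [real_inner_comm]

theorem mul_norm_le_norm_sub_of_mem_orthogonal {c : ℝ} (hc0 : 0 ≤ c) (hc1 : c ≤ 1) {x r : E}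
    (hx : x ∈ Kᗮ) (hr : c * ‖r‖ ≤ ‖K.starProjection r‖) : c * ‖x‖ ≤ ‖x - r‖ := by
  have hinner : ⟪x, r⟫ = ⟪x, Kᗮ.starProjection r⟫ := by
    rw [← inner_starProjection_left_eq_right, starProjection_eq_self_iff.mpr hx]
  have hQ : ‖Kᗮ.starProjection r‖ ^ 2 ≤ (1 - c ^ 2) * ‖r‖ ^ 2 := by
    have := norm_sq_eq_add_norm_sq_starProjection r K
    nlinarith [pow_le_pow_left₀ (by positivity) hr 2]
  have hcos : ⟪x, r⟫ ^ 2 ≤ (1 - c ^ 2) * ‖x‖ ^ 2 * ‖r‖ ^ 2 :=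
    calc ⟪x, r⟫ ^ 2 = |⟪x, Kᗮ.starProjection r⟫| ^ 2 := by rw [sq_abs, hinner]
      _ ≤ (‖x‖ * ‖Kᗮ.starProjection r‖) ^ 2 := by gcongr; exact abs_real_inner_le_norm _ _
      _ ≤ ‖x‖ ^ 2 * ((1 - c ^ 2) * ‖r‖ ^ 2) := by rw [mul_pow]; gcongr
      _ = _ := by ring
  -- AM-GM: `2 ⟪x, r⟫ ≤ 2 √(1 - c²) ‖x‖ ‖r‖ ≤ (1 - c²) ‖x‖² + ‖r‖²`
  have hamgm : 2 * ⟪x, r⟫ ≤ (1 - c ^ 2) * ‖x‖ ^ 2 + ‖r‖ ^ 2 := by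
    have hu : 0 ≤ (1 - c ^ 2) * ‖x‖ ^ 2 :=
      mul_nonneg (sub_nonneg.mpr (pow_le_one₀ hc0 hc1)) (sq_nonneg _)
    refine (abs_le_of_sq_le_sq' ?_ (by positivity)).2
    nlinarith [sq_nonneg ((1 - c ^ 2) * ‖x‖ ^ 2 - ‖r‖ ^ 2)]
  rw [← pow_le_pow_iff_left₀ (by positivity) (norm_nonneg _) two_ne_zero, mul_pow,
    norm_sub_sq_real]
  linarith

theorem mul_norm_le_norm_sub_of_mem_sup {c : ℝ} (hc0 : 0 ≤ c) (hc1 : c ≤ 1)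
    (hL : ∀ r ∈ L, c * ‖r‖ ≤ ‖K.starProjection r‖) {x v : E} (hx : x ∈ Kᗮ)
    (hv : v ∈ L ⊔ (K ⊓ Lᗮ)) : c * ‖x‖ ≤ ‖x - v‖ := by
  obtain ⟨r, hr, w, hw, rfl⟩ := mem_sup.mp hv
  have horth : ⟪x - r, w⟫ = 0 := by
    rw [inner_sub_left, inner_left_of_mem_orthogonal hw.1 hx,
      inner_right_of_mem_orthogonal hr hw.2, sub_zero]
  have hpyth := norm_sub_sq_eq_norm_sq_add_norm_sq_real horth
  calc c * ‖x‖ ≤ ‖x - r‖ := mul_norm_le_norm_sub_of_mem_orthogonal K hc0 hc1 hx (hL r hr)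
    _ ≤ ‖x - (r + w)‖ := by
      rw [← sub_sub]
      exact nonneg_le_nonneg_of_sq_le_sq (norm_nonneg _) (by linarith [mul_self_nonneg ‖w‖])

end Projection

theorem pbdw_improved_error_bound_general (H : Type*) [NormedAddCommGroup H]
    [InnerProductSpace ℝ H]
    (RN SM : Submodule ℝ H) [Submodule.HasOrthogonalProjection SM]
    (c : ℝ)
    (hc : c = sInf {y : ℝ | ∃ r ∈ RN, ‖r‖ = 1 ∧ y = ‖(Submodule.orthogonalProjectionOnto SM r : H)‖})
    (hcpos : 0 < c) (f s : H) (hs : (Submodule.orthogonalProjectionOnto SM f : H) = s)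
    (g : H) (hg : g ∈ RN)
    (hmin : ∀ g' ∈ RN,
      ‖s - (Submodule.orthogonalProjectionOnto SM g : H)‖ ≤ ‖s - (Submodule.orthogonalProjectionOnto SM g' : H)‖) :
    ‖f - (s + (g - (Submodule.orthogonalProjectionOnto SM g : H)))‖ ≤
      (1 / c) * Metric.infDist f ((RN ⊔ (SM ⊓ RNᗮ) : Submodule ℝ H) : Set H) := by
  simp only [coe_orthogonalProjectionOnto_apply] at hc hs hmin ⊢
  subst hs
  set P := SM.starProjection
  set V := RN ⊔ (SM ⊓ RNᗮ)
  set A := P f + (g - P g)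
  replace hc : c = infNormOnUnitSphere P RN := hc
  have hlow (r) (hr : r ∈ RN) : c * ‖r‖ ≤ ‖P r‖ :=
    hc ▸ infNormOnUnitSphere_mul_norm_le P hr
  have hc1 : c ≤ 1 :=
    hc ▸ infNormOnUnitSphere_le_one P RN SM.norm_starProjection_apply_le (hc ▸ hcpos)
  have hA : A ∈ V := by
    rw [show A = g + (P f - P g) from add_sub_left_comm _ _ _]
    exact V.add_mem (mem_sup_left hg) (mem_sup_right
      (sub_starProjection_mem_inf_orthogonal SM RN (SM.starProjection_apply_mem f) hg hmin))
  have hη : f - A ∈ SMᗮ := by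
    convert SM.sub_starProjection_mem_orthogonal (f - g) using 1
    simp only [A, P, map_sub]; abel
  rw [one_div_mul_eq_div, le_div_iff₀' hcpos, Metric.le_infDist ⟨0, V.zero_mem⟩]
  intro v hv
  rw [dist_eq_norm, ← sub_sub_sub_cancel_right f v A]
  exact mul_norm_le_norm_sub_of_mem_sup SM RN hcpos.le hc1 hlow hη (V.sub_mem hv hA)

theorem pbdw_improved_error_bound (H : Type*) [NormedAddCommGroup H]
    [InnerProductSpace ℝ H] [CompleteSpace H]
    (RN SM : Submodule ℝ H) [FiniteDimensional ℝ RN] [Submodule.HasOrthogonalProjection SM]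
    (c : ℝ)
    (hc : c = sInf {y : ℝ | ∃ r ∈ RN, ‖r‖ = 1 ∧ y = ‖(Submodule.orthogonalProjectionOnto SM r : H)‖})
    (hcpos : 0 < c) (f s : H) (hs : (Submodule.orthogonalProjectionOnto SM f : H) = s)
    (g : H) (hg : g ∈ RN)
    (hmin : ∀ g' ∈ RN,
      ‖s - (Submodule.orthogonalProjectionOnto SM g : H)‖ ≤ ‖s - (Submodule.orthogonalProjectionOnto SM g' : H)‖) :
    ‖f - (s + (g - (Submodule.orthogonalProjectionOnto SM g : H)))‖ ≤
      (1 / c) * Metric.infDist f ((RN ⊔ (SM ⊓ RNᗮ) : Submodule ℝ H) : Set H) :=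
  pbdw_improved_error_bound_general H RN SM c hc hcpos f s hs g hg hmin
end
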